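/- arXiv:0704.1846 — 5 statements merged into one kernel-verified Lean document; each statement's English description precedes it below -/
import Mathlib

section
/- Let λ = (λ₁|λ₂) be a bipartition of n with l = |λ₁|, and let Y_{l,n-l} be the set of minimal-length left coset representatives of the Young subgroup S_l × S_{n-l} in the symmetric group S_n. If s is a row-standard λ-bitableau, t is a row-standard λ-bitableau whose first component is filled with 1,...,l and second component with l+1,...,n, and y ∈ Y_{l,n-l} satisfies d(s) = y·d(t) (where d(u) is the unique permutation sending the canonical bitableau t^λ to u), then s is a standard bitableau if and only if t is a standard bitableau. -/
/-- The sum of the first `j` parts of a partition, encoded as a function `ℕ → ℕ`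
listing its parts in weakly decreasing order (extended by zeros). -/
def psum (f : ℕ → ℕ) (j : ℕ) : ℕ := ∑ i ∈ Finset.range j, f i

/-- `(f1 | f2)` is a bipartition of `n`: each component is a weakly decreasing
function `ℕ → ℕ` (the list of parts, extended by zeros) and the sizes add up to `n`. -/
def IsBipartitionOf (n : ℕ) (f1 f2 : ℕ → ℕ) : Prop :=
  Antitone f1 ∧ Antitone f2 ∧ (∀ i, n ≤ i → f1 i = 0) ∧ (∀ i, n ≤ i → f2 i = 0) ∧
    psum f1 n + psum f2 n = n

/-- The dominance order on bipartitions of `n`:  `(f1|f2) ⊴ (g1|g2)` iff for all `j`,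
`Σ_{i≤j} f1⁽ⁱ⁾ ≤ Σ_{i≤j} g1⁽ⁱ⁾` and `|f1| + Σ_{i≤j} f2⁽ⁱ⁾ ≤ |g1| + Σ_{i≤j} g2⁽ⁱ⁾`. -/
def Dom (n : ℕ) (f1 f2 g1 g2 : ℕ → ℕ) : Prop :=
  (∀ j, psum f1 j ≤ psum g1 j) ∧ ∀ j, psum f1 n + psum f2 j ≤ psum g1 n + psum g2 j

/-- The length of row `i` of component `c` (`false` = first component) of the
bipartition `(f1|f2)`. -/
def part (f1 f2 : ℕ → ℕ) (c : Bool) (i : ℕ) : ℕ := bif c then f2 i else f1 i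

/-- `T` is a `λ`-bitableau for `λ = (f1|f2)` a bipartition of `n`: a filling of the
cells of the pair of Young diagrams by the numbers `0, …, n-1` (0-based version of
`1, …, n`), each used exactly once. -/
def IsBitableau (n : ℕ) (f1 f2 : ℕ → ℕ) (T : Bool → ℕ → ℕ → ℕ) : Prop :=
  (∀ c i j, j < part f1 f2 c i → T c i j < n) ∧
    ∀ m, m < n → ∃! x : Bool × ℕ × ℕ,
      x.2.2 < part f1 f2 x.1 x.2.1 ∧ T x.1 x.2.1 x.2.2 = m

/-- A bitableau is row-standard if its entries increase along the rows of each
component. -/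
def RowStandard (f1 f2 : ℕ → ℕ) (T : Bool → ℕ → ℕ → ℕ) : Prop :=
  ∀ c i j, j + 1 < part f1 f2 c i → T c i j < T c i (j + 1)

/-- A bitableau is standard if its entries increase along rows and down columns in
each component. -/
def Standard (f1 f2 : ℕ → ℕ) (T : Bool → ℕ → ℕ → ℕ) : Prop :=
  RowStandard f1 f2 T ∧ ∀ c i j, j < part f1 f2 c (i + 1) → T c i j < T c (i + 1) j

/-- The entry of the canonical bitableau `t^λ` at cell `(c,i,j)`: the first component
is filled row by row with `0, …, l-1` and the second row by row with `l, …, n-1`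
(0-based version of `1, …, l` and `l+1, …, n`), where `l = |f1| = psum f1 n`. -/
def canon (n : ℕ) (f1 f2 : ℕ → ℕ) (c : Bool) (i j : ℕ) : ℕ :=
  bif c then psum f1 n + psum f2 i + j else psum f1 i + j

/-- `w = d(T)` is the unique permutation of `{0, …, n-1}` sending the canonical
bitableau `t^λ` to `T`. -/
def IsD (n : ℕ) (f1 f2 : ℕ → ℕ) (T : Bool → ℕ → ℕ → ℕ) (w : Equiv.Perm ℕ) : Prop :=
  (∀ i, n ≤ i → w i = i) ∧
    ∀ c i j, j < part f1 f2 c i → w (canon n f1 f2 c i j) = T c i j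

/-- The Coxeter length of a permutation of `{0, …, n-1}`: its number of inversions. -/
def invNum (n : ℕ) (w : Equiv.Perm ℕ) : ℕ :=
  ((Finset.range n ×ˢ Finset.range n).filter fun p => p.1 < p.2 ∧ w p.2 < w p.1).card

/-- `y ∈ Y_{l,n-l}`: a permutation of `{0, …, n-1}` increasing on `{0, …, l-1}` and on
`{l, …, n-1}`; these are the minimal-length left coset representatives of the Young
subgroup `S_l × S_{n-l}` in `S_n`. -/
def IsY (n l : ℕ) (y : Equiv.Perm ℕ) : Prop :=
  (∀ i, n ≤ i → y i = i) ∧ (∀ i, i + 1 < l → y i < y (i + 1)) ∧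
    ∀ i, l ≤ i → i + 1 < n → y i < y (i + 1)

/-!
Since `d(s) = y · d(t)`, every entry of `s` is `y` applied to the entry of `t` in the same cell.
The entries of the first component of `t` are exactly `0, …, l-1` (a counting argument), so those
of the second component lie in `l, …, n-1`; `y` is increasing on each of these two blocks, hence
it preserves every comparison between two entries of the same component. Standardness only
compares entries within one component.
-/

section Bitableau

variable {n : ℕ} {f1 f2 : ℕ → ℕ} {T : Bool → ℕ → ℕ → ℕ}

lemma IsBitableau.cell_eq_of_apply_eq (hT : IsBitableau n f1 f2 T) {c c' : Bool} {i i' j j' : ℕ}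
    (hj : j < part f1 f2 c i) (hj' : j' < part f1 f2 c' i') (he : T c i j = T c' i' j') :
    (c, i, j) = (c', i', j') := by
  obtain ⟨_, _, huniq⟩ := hT.2 _ (hT.1 c i j hj)
  exact (huniq (c, i, j) ⟨hj, rfl⟩).trans (huniq (c', i', j') ⟨hj', he.symm⟩).symm

/-- The first component has `l = |λ₁|` cells, so if its entries are all `< l` they are all of
`0, …, l-1`. -/
lemma IsBitableau.psum_le_of_forall_lt_psum (hT : IsBitableau n f1 f2 T)
    (hfirst : ∀ i j, j < f1 i → T false i j < psum f1 n) {i j : ℕ} (hj : j < f2 i) :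
    psum f1 n ≤ T true i j := by
  by_contra! hlt
  let cells : Finset ((_ : ℕ) × ℕ) := (Finset.range n).sigma fun i => Finset.range (f1 i)
  have hcells : ∀ x ∈ cells, x.2 < f1 x.1 := fun x hx => by
    simpa using (Finset.mem_sigma.mp hx).2
  obtain ⟨x, hx, hxT⟩ := Finset.surj_on_of_inj_on_of_card_le
    (s := cells) (t := Finset.range (psum f1 n)) (fun x _ => T false x.1 x.2)
    (fun x hx => Finset.mem_range.mpr (hfirst x.1 x.2 (hcells x hx)))
    (fun x x' hx hx' he => by
      have := hT.cell_eq_of_apply_eq (hcells x hx) (hcells x' hx') he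
      simp only [Prod.mk.injEq, true_and] at this
      exact Sigma.ext this.1 (heq_of_eq this.2))
    (by simp [cells, Finset.card_sigma, psum])
    (T true i j) (Finset.mem_range.mpr hlt)
  have := hT.cell_eq_of_apply_eq (c := false) (c' := true) (hcells x hx) hj hxT.symm
  simp at this

end Bitableau

section IsY

variable {n l : ℕ} {y : Equiv.Perm ℕ}

lemma IsY.strictMonoOn_Iio (hy : IsY n l y) : StrictMonoOn y (Set.Iio l) :=
  strictMonoOn_of_lt_add_one Set.ordConnected_Iio fun a _ _ ha => hy.2.1 a ha

lemma IsY.strictMonoOn_Ico (hy : IsY n l y) : StrictMonoOn y (Set.Ico l n) :=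
  strictMonoOn_of_lt_add_one Set.ordConnected_Ico fun a _ ha ha' => hy.2.2 a ha.1 ha'.2

end IsY

lemma IsD.apply_eq_of_eq_mul {n : ℕ} {f1 f2 : ℕ → ℕ} {S T : Bool → ℕ → ℕ → ℕ}
    {y ds dt : Equiv.Perm ℕ} (hds : IsD n f1 f2 S ds) (hdt : IsD n f1 f2 T dt)
    (heq : ds = y * dt) {c : Bool} {i j : ℕ} (hj : j < part f1 f2 c i) :
    S c i j = y (T c i j) := by
  rw [← hds.2 c i j hj, ← hdt.2 c i j hj, heq, Equiv.Perm.mul_apply]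

lemma standard_iff_of_lt_iff_lt {f1 f2 : ℕ → ℕ} (hf1 : Antitone f1) (hf2 : Antitone f2)
    {S T : Bool → ℕ → ℕ → ℕ}
    (hST : ∀ c i j i' j', j < part f1 f2 c i → j' < part f1 f2 c i' →
      (S c i j < S c i' j' ↔ T c i j < T c i' j')) :
    Standard f1 f2 S ↔ Standard f1 f2 T := by
  have hpart : ∀ c i, part f1 f2 c (i + 1) ≤ part f1 f2 c i := by
    rintro (_ | _) i
    · exact hf1 i.le_succ
    · exact hf2 i.le_succ
  exact and_congr (forall₄_congr fun c i j hj => hST c i j i (j + 1) (by omega) hj)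
    (forall₄_congr fun c i j hj => hST c i j (i + 1) j ((hpart c i).trans_lt' hj) hj)

theorem standard_iff_standard_general (n : ℕ) (f1 f2 : ℕ → ℕ) (hbp : IsBipartitionOf n f1 f2)
    (S T : Bool → ℕ → ℕ → ℕ) (y ds dt : Equiv.Perm ℕ)
    (hT : IsBitableau n f1 f2 T)
    (hTfirst : ∀ i j, j < f1 i → T false i j < psum f1 n)
    (hy : IsY n (psum f1 n) y)
    (hds : IsD n f1 f2 S ds) (hdt : IsD n f1 f2 T dt)
    (heq : ds = y * dt) :
    Standard f1 f2 S ↔ Standard f1 f2 T := by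
  let block : Bool → Set ℕ := fun c => bif c then Set.Ico (psum f1 n) n else Set.Iio (psum f1 n)
  have hblock : ∀ c i j, j < part f1 f2 c i → T c i j ∈ block c := by
    rintro (_ | _) i j hj
    · exact hTfirst i j hj
    · exact ⟨hT.psum_le_of_forall_lt_psum hTfirst hj, hT.1 true i j hj⟩
  have hmono : ∀ c, StrictMonoOn y (block c) := by
    rintro (_ | _)
    · exact hy.strictMonoOn_Iio
    · exact hy.strictMonoOn_Ico
  refine standard_iff_of_lt_iff_lt hbp.1 hbp.2.1 fun c i j i' j' hj hj' => ?_
  rw [hds.apply_eq_of_eq_mul hdt heq hj, hds.apply_eq_of_eq_mul hdt heq hj']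
  exact (hmono c).lt_iff_lt (hblock c i j hj) (hblock c i' j' hj')

/-- if `s`, `t` are row-standard `λ`-bitableaux, the first component of
`t` is filled with `0, …, l-1` (0-based version of `1, …, l`) where `l = |λ₁|`,
`y ∈ Y_{l,n-l}`, and `d(s) = y·d(t)`, then `s` is standard iff `t` is standard. -/
theorem standard_iff_standard (n : ℕ) (f1 f2 : ℕ → ℕ) (hbp : IsBipartitionOf n f1 f2)
    (S T : Bool → ℕ → ℕ → ℕ) (y ds dt : Equiv.Perm ℕ)
    (hS : IsBitableau n f1 f2 S) (hSrow : RowStandard f1 f2 S)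
    (hT : IsBitableau n f1 f2 T) (hTrow : RowStandard f1 f2 T)
    (hTfirst : ∀ i j, j < f1 i → T false i j < psum f1 n)
    (hy : IsY n (psum f1 n) y)
    (hds : IsD n f1 f2 S ds) (hdt : IsD n f1 f2 T dt)
    (heq : ds = y * dt) :
    Standard f1 f2 S ↔ Standard f1 f2 T :=
  standard_iff_standard_general n f1 f2 hbp S T y ds dt hT hTfirst hy hds hdt heq
end

section
/- For bipartitions λ = (λ₁|λ₂) and μ = (μ₁|μ₂) of n, one has (λ₁|λ₂) ⊴ (μ₂|μ₁*) if and only if (μ₁|μ₂*) ⊴ (λ₂*|λ₁*), where ν* denotes the conjugate (transpose) partition and ⊴ is the dominance order on bipartitions. -/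
/-- The conjugate (transpose) of a partition of a number at most `n`:
`f*(i) = #{j : f(j) > i}`. -/
def conj (n : ℕ) (f : ℕ → ℕ) (i : ℕ) : ℕ :=
  ((Finset.range n).filter fun j => i < f j).card


/-!
View a partition `f` of size at most `n` as a Young diagram. Its first `k` rows and its first
`m` columns together cover at most the whole diagram plus the `k × m` rectangle, so
`psum f k + psum f* m ≤ k m + |f|`, with equality when the corner of the rectangle lies on the rim
of the diagram: `k = f*(m)`, or `m = f(k)`. Comparing with this bound at those extremal
rectangles shows that `psum f ≤ psum g` pointwise iff `|f| + psum g* ≤ |g| + psum f*` pointwise.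
Applied to `(λ₁, μ₂)` and to `(μ₁, λ₂*)`, together with `|λ₁| + |λ₂| = n = |μ₁| + |μ₂|` and
`λ₂** = λ₂`, this turns each half of one dominance condition into the other half of the other.
-/

section

variable {n : ℕ} {f g : ℕ → ℕ}

lemma psum_eq_of_le (h0 : ∀ i, n ≤ i → f i = 0) {j : ℕ} (h : n ≤ j) : psum f j = psum f n :=
  (Finset.sum_subset (Finset.range_subset_range.2 h) fun i _ hi ↦
    h0 i (by simpa using hi)).symm

lemma le_psum {i : ℕ} (hi : i < n) : f i ≤ psum f n :=
  Finset.single_le_sum (fun _ _ ↦ Nat.zero_le _) (Finset.mem_range.2 hi)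

lemma conj_le (m : ℕ) : conj n f m ≤ n :=
  (Finset.card_filter_le _ _).trans (Finset.card_range n).le

lemma conj_antitone : Antitone (conj n f) := fun _ _ hab ↦
  Finset.card_le_card (Finset.monotone_filter_right _ fun _ _ ↦ hab.trans_lt)

lemma conj_eq_zero (hn : psum f n ≤ n) {i : ℕ} (hi : n ≤ i) : conj n f i = 0 :=
  Finset.card_eq_zero.2 <| Finset.filter_eq_empty_iff.2 fun _ hj ↦
    (le_psum (Finset.mem_range.1 hj)).trans (hn.trans hi) |>.not_gt

lemma card_range_filter_lt (c m : ℕ) : ((Finset.range m).filter (· < c)).card = min c m := by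
  rw [show (Finset.range m).filter (· < c) = Finset.range (min c m) by
    ext; simp only [Finset.mem_filter, Finset.mem_range, lt_min_iff, and_comm],
    Finset.card_range]

lemma psum_conj (m : ℕ) : psum (conj n f) m = ∑ j ∈ Finset.range n, min (f j) m := by
  simp only [psum, conj, Finset.card_filter]
  rw [Finset.sum_comm]
  refine Finset.sum_congr rfl fun j _ ↦ ?_
  rw [← Finset.card_filter, card_range_filter_lt]

lemma psum_conj_eq_psum (hn : psum f n ≤ n) : psum (conj n f) n = psum f n := by
  rw [psum_conj]
  exact Finset.sum_congr rfl fun j hj ↦ min_eq_left ((le_psum (Finset.mem_range.1 hj)).trans hn)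

lemma lt_conj_iff (hf : Antitone f) {j m : ℕ} : j < conj n f m ↔ j < n ∧ m < f j := by
  constructor
  · intro hj
    have hjn : j < n := hj.trans_le (conj_le m)
    refine ⟨hjn, lt_of_not_ge fun hfj ↦ hj.not_ge ?_⟩
    -- every row of length `> m` comes before row `j`
    calc conj n f m ≤ (Finset.range j).card :=
          Finset.card_le_card fun t ht ↦ by
            simp only [Finset.mem_filter, Finset.mem_range] at ht ⊢
            exact lt_of_not_ge fun hjt ↦ (ht.2.trans_le ((hf hjt).trans hfj)).false
      _ = j := Finset.card_range j
  · rintro ⟨hjn, hmf⟩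
    calc j < (Finset.range (j + 1)).card := by simp
      _ ≤ conj n f m := Finset.card_le_card fun t ht ↦ by
          simp only [Finset.mem_filter, Finset.mem_range] at ht ⊢
          exact ⟨by omega, hmf.trans_le (hf (by omega))⟩

lemma conj_conj (hf : Antitone f) (h0 : ∀ i, n ≤ i → f i = 0) (hn : psum f n ≤ n) :
    conj n (conj n f) = f := by
  funext i
  rcases lt_or_ge i n with hi | hi
  · have hfilter : (Finset.range n).filter (fun j ↦ i < conj n f j) =
        (Finset.range n).filter (· < f i) :=
      Finset.filter_congr fun j _ ↦ by rw [lt_conj_iff hf]; simp [hi]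
    rw [conj, hfilter, card_range_filter_lt, min_eq_left ((le_psum hi).trans hn)]
  · rw [h0 i hi]
    exact conj_eq_zero ((psum_conj_eq_psum hn).le.trans hn) hi

lemma psum_add_psum_conj_le_of_le {k : ℕ} (hk : k ≤ n) (m : ℕ) :
    psum f k + psum (conj n f) m ≤ k * m + psum f n := by
  rw [psum_conj, psum, psum, ← Finset.sum_range_add_sum_Ico (fun j ↦ min (f j) m) hk,
    ← Finset.sum_range_add_sum_Ico f hk]
  have hrect : ∑ j ∈ Finset.range k, min (f j) m ≤ k * m := by
    simpa using Finset.sum_le_card_nsmul (Finset.range k) _ m fun j _ ↦ min_le_right (f j) m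
  have hrest : ∑ j ∈ Finset.Ico k n, min (f j) m ≤ ∑ j ∈ Finset.Ico k n, f j :=
    Finset.sum_le_sum fun j _ ↦ min_le_left _ _
  omega

lemma psum_add_psum_conj_le (h0 : ∀ i, n ≤ i → f i = 0) (k m : ℕ) :
    psum f k + psum (conj n f) m ≤ k * m + psum f n := by
  rcases le_or_gt k n with hk | hk
  · exact psum_add_psum_conj_le_of_le hk m
  · have := psum_add_psum_conj_le_of_le (f := f) (le_refl n) m
    have := Nat.mul_le_mul_right m hk.le
    rw [psum_eq_of_le h0 hk.le]
    omega

lemma psum_add_psum_conj_eq {k m : ℕ} (hk : k ≤ n) (hlo : ∀ j < k, m ≤ f j)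
    (hhi : ∀ j, k ≤ j → j < n → f j ≤ m) :
    psum f k + psum (conj n f) m = k * m + psum f n := by
  rw [psum_conj, psum, psum, ← Finset.sum_range_add_sum_Ico (fun j ↦ min (f j) m) hk,
    ← Finset.sum_range_add_sum_Ico f hk]
  have hrect : ∑ j ∈ Finset.range k, min (f j) m = k * m := by
    rw [Finset.sum_congr rfl fun j hj ↦ min_eq_right (hlo j (Finset.mem_range.1 hj))]
    simp
  have hrest : ∑ j ∈ Finset.Ico k n, min (f j) m = ∑ j ∈ Finset.Ico k n, f j :=
    Finset.sum_congr rfl fun j hj ↦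
      min_eq_left (hhi j (Finset.mem_Ico.1 hj).1 (Finset.mem_Ico.1 hj).2)
  omega

lemma psum_conj_apply_add_psum_conj (hf : Antitone f) (m : ℕ) :
    psum f (conj n f m) + psum (conj n f) m = conj n f m * m + psum f n :=
  psum_add_psum_conj_eq (conj_le m) (fun _ hj ↦ ((lt_conj_iff hf).1 hj).2.le)
    fun _ hj hjn ↦ not_lt.1 fun hm ↦ hj.not_gt ((lt_conj_iff hf).2 ⟨hjn, hm⟩)

lemma psum_add_psum_conj_apply (hf : Antitone f) {k : ℕ} (hk : k ≤ n) :
    psum f k + psum (conj n f) (f k) = k * f k + psum f n :=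
  psum_add_psum_conj_eq hk (fun _ hj ↦ hf hj.le) fun _ hj _ ↦ hf hj

theorem forall_psum_le_iff (hf : Antitone f) (hg : Antitone g)
    (hf0 : ∀ i, n ≤ i → f i = 0) (hg0 : ∀ i, n ≤ i → g i = 0) :
    (∀ j, psum f j ≤ psum g j) ↔
      ∀ m, psum f n + psum (conj n g) m ≤ psum g n + psum (conj n f) m := by
  constructor
  · intro h m
    have := psum_conj_apply_add_psum_conj (n := n) hf m
    have := psum_add_psum_conj_le hg0 (conj n f m) m
    have := h (conj n f m)
    omega
  · intro h
    have hle : ∀ j ≤ n, psum f j ≤ psum g j := fun j hj ↦ by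
      have := psum_add_psum_conj_apply hg hj
      have := psum_add_psum_conj_le hf0 j (g j)
      have := h (g j)
      omega
    intro j
    rcases le_or_gt j n with hj | hj
    · exact hle j hj
    · rw [psum_eq_of_le hf0 hj.le, psum_eq_of_le hg0 hj.le]
      exact hle n le_rfl

end

/-- for bipartitions `λ = (λ₁|λ₂)` and `μ = (μ₁|μ₂)` of `n`,
`(λ₁|λ₂) ⊴ (μ₂|μ₁*)` if and only if `(μ₁|μ₂*) ⊴ (λ₂*|λ₁*)`. -/
theorem dominance_conjugate_iff (n : ℕ) (l1 l2 m1 m2 : ℕ → ℕ)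
    (hl : IsBipartitionOf n l1 l2) (hm : IsBipartitionOf n m1 m2) :
    Dom n l1 l2 m2 (conj n m1) ↔
      Dom n m1 (conj n m2) (conj n l2) (conj n l1) := by
  obtain ⟨hl1, hl2, hl10, hl20, hlsize⟩ := hl
  obtain ⟨hm1, hm2, hm10, hm20, hmsize⟩ := hm
  have hl2n : psum l2 n ≤ n := by omega
  have hsize := psum_conj_eq_psum hl2n
  have hfirst : (∀ j, psum l1 j ≤ psum m2 j) ↔
      ∀ j, psum m1 n + psum (conj n m2) j ≤ psum (conj n l2) n + psum (conj n l1) j :=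
    (forall_psum_le_iff hl1 hm2 hl10 hm20).trans (forall_congr' fun _ ↦ by omega)
  have hsecond : (∀ j, psum l1 n + psum l2 j ≤ psum m2 n + psum (conj n m1) j) ↔
      ∀ j, psum m1 j ≤ psum (conj n l2) j := by
    rw [forall_psum_le_iff hm1 conj_antitone hm10 fun _ ↦ conj_eq_zero hl2n,
      conj_conj hl2 hl20 hl2n, hsize]
    exact forall_congr' fun _ ↦ by omega
  exact ⟨fun ⟨h1, h2⟩ ↦ ⟨hsecond.1 h2, hfirst.1 h1⟩, fun ⟨h1, h2⟩ ↦ ⟨hfirst.2 h2, hsecond.2 h1⟩⟩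
end

section
/- With ρ_λ and ρ the two 3-dimensional matrix representations of the Hecke algebra H₃ of type B₃ over A = ℤ[V^{±1}, v^{±1}] given by: ρ_λ(T_t) = [[V, Vv^{−1}+V^{−1}v, Vv^{−2}+V^{−1}v²],[0,−V^{−1},0],[0,0,−V^{−1}]], ρ_λ(T_{s₁}) = [[−v^{−1},0,0],[1,v,0],[0,0,v]], ρ_λ(T_{s₂}) = [[v,1,0],[0,−v^{−1},0],[0,1,v]], and ρ(T_t) = [[−V^{−1},0,0],[0,−V^{−1},0],[1, Vv^{−1}+V^{−1}v, V]], ρ(T_{s₁}) = [[v,0,0],[0,v,1],[0,0,−v^{−1}]], ρ(T_{s₂}) = [[v, Vv^{−2}+V^{−1}v², 0],[0,−v^{−1},0],[0,1,v]], the matrix P = [[0,0,Vv^{−2}+V^{−1}v²],[0,1,0],[1,0,0]] satisfies P·ρ_λ(T_s) = ρ(T_s)·P for each s ∈ {t, s₁, s₂}. -/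
/-- The ring `A = ℤ[V^{±1}, v^{±1}]` of Laurent polynomials in two independent
indeterminates `V`, `v`, realised as the group algebra of `ℤ²` over `ℤ`. -/
abbrev LA : Type := AddMonoidAlgebra ℤ (ℤ × ℤ)

/-- The monomial `Vⁱ vʲ` of `A`. -/
noncomputable def mon (i j : ℤ) : LA := AddMonoidAlgebra.single (i, j) 1

/-- `ρ_λ(T_t)`. -/
noncomputable def Mt : Matrix (Fin 3) (Fin 3) LA :=
  !![mon 1 0, mon 1 (-1) + mon (-1) 1, mon 1 (-2) + mon (-1) 2;
     0, -mon (-1) 0, 0;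
     0, 0, -mon (-1) 0]

/-- `ρ_λ(T_{s₁})`. -/
noncomputable def Ms1 : Matrix (Fin 3) (Fin 3) LA :=
  !![-mon 0 (-1), 0, 0;
     1, mon 0 1, 0;
     0, 0, mon 0 1]

/-- `ρ_λ(T_{s₂})`. -/
noncomputable def Ms2 : Matrix (Fin 3) (Fin 3) LA :=
  !![mon 0 1, 1, 0;
     0, -mon 0 (-1), 0;
     0, 1, mon 0 1]

/-- `ρ(T_t)`. -/
noncomputable def Nt : Matrix (Fin 3) (Fin 3) LA :=
  !![-mon (-1) 0, 0, 0;
     0, -mon (-1) 0, 0;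
     1, mon 1 (-1) + mon (-1) 1, mon 1 0]

/-- `ρ(T_{s₁})`. -/
noncomputable def Ns1 : Matrix (Fin 3) (Fin 3) LA :=
  !![mon 0 1, 0, 0;
     0, mon 0 1, 1;
     0, 0, -mon 0 (-1)]

/-- `ρ(T_{s₂})`. -/
noncomputable def Ns2 : Matrix (Fin 3) (Fin 3) LA :=
  !![mon 0 1, mon 1 (-2) + mon (-1) 2, 0;
     0, -mon 0 (-1), 0;
     0, 1, mon 0 1]

/-- The intertwining matrix `P`. -/
noncomputable def Pmat : Matrix (Fin 3) (Fin 3) LA :=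
  !![0, 0, mon 1 (-2) + mon (-1) 2;
     0, 1, 0;
     1, 0, 0]

/-!
`P` swaps the first and third coordinates and rescales by `q = Vv⁻² + V⁻¹v²`, and under this
swap the entries of `ρ_λ(T_s)` and `ρ(T_s)` match up. So each identity holds in any commutative
semiring, with `V`, `v`, `-V⁻¹`, `-v⁻¹` and the two binomials replaced by independent elements;
no relation such as `V·V⁻¹ = 1` is involved.
-/

section Intertwiner

variable {R : Type*} [CommSemiring R]

def intertwiner (q : R) : Matrix (Fin 3) (Fin 3) R :=
  !![0, 0, q;
     0, 1, 0;
     1, 0, 0]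

theorem semiconjBy_intertwiner_t (a c r q : R) :
    SemiconjBy (intertwiner q) !![a, r, q; 0, c, 0; 0, 0, c] !![c, 0, 0; 0, c, 0; 1, r, a] := by
  simp only [SemiconjBy, intertwiner, Matrix.mul_fin_three]
  ring_nf

theorem semiconjBy_intertwiner_s₁ (b c q : R) :
    SemiconjBy (intertwiner q) !![c, 0, 0; 1, b, 0; 0, 0, b] !![b, 0, 0; 0, b, 1; 0, 0, c] := by
  simp only [SemiconjBy, intertwiner, Matrix.mul_fin_three]
  ring_nf

theorem semiconjBy_intertwiner_s₂ (b c q : R) :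
    SemiconjBy (intertwiner q) !![b, 1, 0; 0, c, 0; 0, 1, b] !![b, q, 0; 0, c, 0; 0, 1, b] := by
  simp only [SemiconjBy, intertwiner, Matrix.mul_fin_three]
  ring_nf

end Intertwiner

/-- `P·ρ_λ(T_s) = ρ(T_s)·P` for each `s ∈ {t, s₁, s₂}`. -/
theorem P_intertwines :
    Pmat * Mt = Nt * Pmat ∧ Pmat * Ms1 = Ns1 * Pmat ∧ Pmat * Ms2 = Ns2 * Pmat :=
  ⟨semiconjBy_intertwiner_t _ _ _ _, semiconjBy_intertwiner_s₁ _ _ _,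
    semiconjBy_intertwiner_s₂ _ _ _⟩
end

section
/- Let A = ℤ[V^{±1}, v^{±1}] and P = [[0,0,Vv^{−2}+V^{−1}v²],[0,1,0],[1,0,0]] ∈ M₃(A). Then there is no element c of the field of fractions K of A such that all entries of cP lie in A and det(cP) is a unit of A. -/
noncomputable instance : IsDomain LA := NoZeroDivisors.to_isDomain _

theorem Matrix.eq_smul_of_map_eq_smul {R S m n : Type*} [CommRing R] [CommRing S]
    {f : R →+* S} (hf : Function.Injective f) {M N : Matrix m n R} {c : S}
    (h : M.map f = c • N.map f) {i : m} {j : n} (hN : N i j = 1) : M = M i j • N := by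
  have hc : f (M i j) = c := by simpa [hN] using congr_fun₂ h i j
  ext k l
  apply hf
  simpa [← hc] using congr_fun₂ h k l

noncomputable def augmentation : LA →ₐ[ℤ] ℤ := AddMonoidAlgebra.lift ℤ ℤ (ℤ × ℤ) 1

@[simp]
theorem augmentation_mon (i j : ℤ) : augmentation (mon i j) = 1 := by
  simp [augmentation, mon, AddMonoidAlgebra.lift_single]

theorem Pmat_det : Pmat.det = -(mon 1 (-2) + mon (-1) 2) := by
  simp [Pmat, Matrix.det_fin_three]

theorem not_isUnit_Pmat_det : ¬ IsUnit Pmat.det := by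
  intro h
  have h2 : IsUnit (-2 : ℤ) := by simpa [Pmat_det, two_mul] using h.map augmentation
  simp [Int.isUnit_iff] at h2

/-- there is no `c` in the field of fractions `K` of `A` such that all
entries of `c·P` lie in `A` and `det(c·P)` is a unit of `A`.  (Entries of `c·P` lying
in `A` is expressed by exhibiting a matrix `M` over `A` mapping to `c·P`, and then
`det(c·P)` being a unit of `A` means `det M` is a unit of `A`.) -/
theorem no_unimodular_rescaling :
    ¬ ∃ (c : FractionRing LA) (M : Matrix (Fin 3) (Fin 3) LA),
      M.map (algebraMap LA (FractionRing LA)) =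
        c • Pmat.map (algebraMap LA (FractionRing LA)) ∧
      IsUnit M.det := by
  rintro ⟨c, M, hM, hdet⟩
  have hMP : M = M 2 0 • Pmat :=
    M.eq_smul_of_map_eq_smul (IsFractionRing.injective LA (FractionRing LA)) hM (by simp [Pmat])
  rw [hMP, Matrix.det_smul] at hdet
  exact not_isUnit_Pmat_det (isUnit_of_mul_isUnit_right hdet)
end

section
/- In the Hecke algebra H₃ of type B₃ over A = ℤ[V^{±1}, v^{±1}], the 3-dimensional representation ρ_λ given by ρ_λ(T_t) = [[V, Vv^{−1}+V^{−1}v, Vv^{−2}+V^{−1}v²],[0,−V^{−1},0],[0,0,−V^{−1}]], ρ_λ(T_{s₁}) = [[−v^{−1},0,0],[1,v,0],[0,0,v]], ρ_λ(T_{s₂}) = [[v,1,0],[0,−v^{−1},0],[0,1,v]] becomes absolutely irreducible over the field of fractions K of A; that is, the K-subalgebra of M₃(K) generated by these three matrices is all of M₃(K). -/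
/-!
Write `Eᵢⱼ` for the matrix units. With `c = Vv + V⁻¹v⁻¹` one has
`(ρ(T_t) + V⁻¹)(v - ρ(T_{s₁})) = c E₀₀`, so `E₀₀` lies in the generated algebra once `c ≠ 0`.
Multiplying `E₀₀` by the generators on either side then produces `E₁₀`, `E₀₁`, `E₂₀` and,
because the `(0, 2)` entry `Vv⁻² + V⁻¹v²` of `ρ(T_t)` is nonzero, `E₀₂`. An algebra containing
the matrix units of row `0` and of column `0` contains every `Eᵢⱼ = Eᵢ₀ E₀ⱼ`. Over the fraction
field of `ℤ[V^{±1}, v^{±1}]` both scalars are nonzero, being sums of two distinct monomials.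
-/

open Matrix

theorem Matrix.subalgebra_eq_top_of_single_mem {R n : Type*} [CommSemiring R] [Fintype n]
    [DecidableEq n] (S : Subalgebra R (Matrix n n R)) (a : n)
    (hcol : ∀ i, single i a 1 ∈ S) (hrow : ∀ j, single a j 1 ∈ S) : S = ⊤ := by
  refine top_unique fun M _ ↦ ?_
  rw [matrix_eq_sum_single M]
  refine S.sum_mem fun i _ ↦ S.sum_mem fun j _ ↦ ?_
  have : single i j (M i j) = M i j • (single i a 1 * single a j 1) := by
    rw [single_mul_single_same, smul_single, smul_eq_mul, one_mul, mul_one]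
  rw [this]
  exact S.smul_mem (S.mul_mem (hcol i) (hrow j)) _

section Field

variable {F : Type*} [Field F]

def rhoT (V v : F) : Matrix (Fin 3) (Fin 3) F :=
  !![V, V * v⁻¹ + V⁻¹ * v, V * (v ^ 2)⁻¹ + V⁻¹ * v ^ 2;
     0, -V⁻¹, 0;
     0, 0, -V⁻¹]

def rhoS1 (v : F) : Matrix (Fin 3) (Fin 3) F :=
  !![-v⁻¹, 0, 0;
     1, v, 0;
     0, 0, v]

def rhoS2 (v : F) : Matrix (Fin 3) (Fin 3) F :=
  !![v, 1, 0;
     0, -v⁻¹, 0;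
     0, 1, v]

lemma rhoT_add_mul_sub_rhoS1 {V v : F} (hV : V ≠ 0) (hv : v ≠ 0) :
    (rhoT V v + V⁻¹ • 1) * (v • 1 - rhoS1 v) = (V * v + V⁻¹ * v⁻¹) • single 0 0 1 := by
  ext i j
  fin_cases i <;> fin_cases j <;> simp [rhoT, rhoS1, mul_apply, Fin.sum_univ_three, one_apply]
  field_simp
  ring

lemma rhoS1_mul_single_zero_zero (v : F) :
    rhoS1 v * single 0 0 1 = -v⁻¹ • single 0 0 1 + single 1 0 1 := by
  ext i j
  fin_cases i <;> fin_cases j <;> simp [rhoS1, mul_apply, single_apply]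

lemma single_zero_zero_mul_rhoS2 (v : F) :
    single 0 0 1 * rhoS2 v = v • single 0 0 1 + single 0 1 1 := by
  ext i j
  fin_cases i <;> fin_cases j <;> simp [rhoS2, mul_apply, single_apply]

lemma rhoS2_mul_single_one_zero (v : F) :
    rhoS2 v * single 1 0 1 = single 0 0 1 - v⁻¹ • single 1 0 1 + single 2 0 1 := by
  ext i j
  fin_cases i <;> fin_cases j <;> simp [rhoS2, mul_apply, single_apply]

lemma single_zero_zero_mul_rhoT (V v : F) :
    single 0 0 1 * rhoT V v = V • single 0 0 1 + (V * v⁻¹ + V⁻¹ * v) • single 0 1 1 +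
      (V * (v ^ 2)⁻¹ + V⁻¹ * v ^ 2) • single 0 2 1 := by
  ext i j
  fin_cases i <;> fin_cases j <;> simp [rhoT, mul_apply, single_apply]

theorem adjoin_rho_eq_top {V v : F} (hc : V * v + V⁻¹ * v⁻¹ ≠ 0)
    (hd : V * (v ^ 2)⁻¹ + V⁻¹ * v ^ 2 ≠ 0) :
    Algebra.adjoin F {rhoT V v, rhoS1 v, rhoS2 v} = ⊤ := by
  set S := Algebra.adjoin F {rhoT V v, rhoS1 v, rhoS2 v}
  have hT : rhoT V v ∈ S := Algebra.subset_adjoin (by simp)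
  have hS1 : rhoS1 v ∈ S := Algebra.subset_adjoin (by simp)
  have hS2 : rhoS2 v ∈ S := Algebra.subset_adjoin (by simp)
  have hV : V ≠ 0 := by rintro rfl; simp at hc
  have hv : v ≠ 0 := by rintro rfl; simp at hc
  have h00 : single 0 0 1 ∈ S := by
    have := S.mul_mem (S.add_mem hT (S.smul_mem S.one_mem V⁻¹))
      (S.sub_mem (S.smul_mem S.one_mem v) hS1)
    rw [rhoT_add_mul_sub_rhoS1 hV hv] at this
    exact (Submodule.smul_mem_iff S.toSubmodule hc).mp this
  have h10 : single 1 0 1 ∈ S := by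
    have := S.mul_mem hS1 h00
    rwa [rhoS1_mul_single_zero_zero, add_mem_cancel_left (S.smul_mem h00 _)] at this
  have h01 : single 0 1 1 ∈ S := by
    have := S.mul_mem h00 hS2
    rwa [single_zero_zero_mul_rhoS2, add_mem_cancel_left (S.smul_mem h00 _)] at this
  have h20 : single 2 0 1 ∈ S := by
    have := S.mul_mem hS2 h10
    rwa [rhoS2_mul_single_one_zero,
      add_mem_cancel_left (S.sub_mem h00 (S.smul_mem h10 _))] at this
  have h02 : single 0 2 1 ∈ S := by
    have := S.mul_mem h00 hT
    rw [single_zero_zero_mul_rhoT,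
      add_mem_cancel_left (S.add_mem (S.smul_mem h00 _) (S.smul_mem h01 _))] at this
    exact (Submodule.smul_mem_iff S.toSubmodule hd).mp this
  refine Matrix.subalgebra_eq_top_of_single_mem S 0 (fun i ↦ ?_) (fun j ↦ ?_)
  · fin_cases i <;> assumption
  · fin_cases j <;> assumption

end Field

lemma mon_add_mon_ne_zero {i j k l : ℤ} (h : (i, j) ≠ (k, l)) : mon i j + mon k l ≠ 0 := by
  intro h0
  have := congrArg (fun p : LA ↦ p.coeff (i, j)) h0
  simp [mon, h.symm] at this

section RingHom

variable {F : Type*} [Field F] (f : LA →+* F)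

lemma map_mon (i j : ℤ) : f (mon i j) = f (mon 1 0) ^ i * f (mon 0 1) ^ j := by
  let φ : Multiplicative (ℤ × ℤ) →* Fˣ :=
    ((f : LA →* F).comp (AddMonoidAlgebra.of ℤ (ℤ × ℤ))).toHomUnits
  have hφ (a b : ℤ) : f (mon a b) = φ (Multiplicative.ofAdd (a, b)) := rfl
  have hsplit : Multiplicative.ofAdd (i, j) =
      Multiplicative.ofAdd ((1, 0) : ℤ × ℤ) ^ i * Multiplicative.ofAdd ((0, 1) : ℤ × ℤ) ^ j := by
    simp [← ofAdd_zsmul, ← ofAdd_add]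
  rw [hφ, hφ, hφ, hsplit, map_mul, map_zpow, map_zpow, Units.val_mul,
    Units.val_zpow_eq_zpow_val, Units.val_zpow_eq_zpow_val]

lemma map_Mt : Mt.map f = rhoT (f (mon 1 0)) (f (mon 0 1)) := by
  ext i j
  fin_cases i <;> fin_cases j <;>
    simp [Mt, rhoT, map_mon f _ (-1), map_mon f (-1), map_mon f _ (-2)]

lemma map_Ms1 : Ms1.map f = rhoS1 (f (mon 0 1)) := by
  ext i j
  fin_cases i <;> fin_cases j <;> simp [Ms1, rhoS1, map_mon f 0 (-1)]

lemma map_Ms2 : Ms2.map f = rhoS2 (f (mon 0 1)) := by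
  ext i j
  fin_cases i <;> fin_cases j <;> simp [Ms2, rhoS2, map_mon f 0 (-1)]

end RingHom

/-- over the field of fractions `K` of `A`, the representation `ρ_λ`
is absolutely irreducible: the `K`-subalgebra of `M₃(K)` generated by the images of
the three matrices is all of `M₃(K)`. -/
theorem rho_lambda_absolutely_irreducible :
    Algebra.adjoin (FractionRing LA)
      ({Mt.map (algebraMap LA (FractionRing LA)),
        Ms1.map (algebraMap LA (FractionRing LA)),
        Ms2.map (algebraMap LA (FractionRing LA))} :
          Set (Matrix (Fin 3) (Fin 3) (FractionRing LA))) = ⊤ := by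
  set f := algebraMap LA (FractionRing LA)
  have hf : Function.Injective f := IsFractionRing.injective LA _
  have hne {i j k l : ℤ} (h : (i, j) ≠ (k, l)) : f (mon i j) + f (mon k l) ≠ 0 := by
    rw [← map_add, map_ne_zero_iff f hf]
    exact mon_add_mon_ne_zero h
  rw [map_Mt, map_Ms1, map_Ms2]
  refine adjoin_rho_eq_top ?_ ?_
  · simpa [map_mon f 1 1, map_mon f (-1) (-1)] using hne (i := 1) (j := 1) (k := -1) (l := -1)
      (by decide)
  · simpa [map_mon f 1 (-2), map_mon f (-1) 2] using hne (i := 1) (j := -2) (k := -1) (l := 2)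
      (by decide)
end
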